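/- The complete elliptic integral of the first kind satisfies the asymptotic K(1 - m') = (1/2)·ln(16/m') + o(1) as m' → 0+. -/

import Mathlib

/-!
Substituting `w = cos θ` gives `K(1 - m) = ∫₀¹ dw / √((1 - w²)(m + (1 - m) w²))`. As `m → 0⁺` the
integrand tends to `1 / (w √(1 - w²))`, which is not integrable at `0`. The singular part is carried
by `1 / √(m + w²)`, whose integral over `(0, 1)` is `log (1 + √(1 + m)) - (log m) / 2`. The
remainder is dominated, uniformly for `m ≤ 1/2`, by an integrable function, so its integral tends to
`∫₀¹ (1 / (w √(1 - w²)) - 1 / w) dw = log 2`. Hence `K(1 - m) = log 4 - (log m) / 2 + o(1)`.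
-/

open Real

/-- Complete elliptic integral of the first kind with the parameter as argument. -/
noncomputable def ellipticK (m : ℝ) : ℝ :=
  ∫ θ in (0:ℝ)..(π / 2), 1 / Real.sqrt (1 - m * Real.sin θ ^ 2)

open MeasureTheory Set Filter Topology

theorem cos_image_Ioo_zero_pi_div_two : cos '' Ioo 0 (π / 2) = Ioo 0 1 := by
  ext w
  constructor
  · rintro ⟨θ, ⟨hθ₀, hθ₁⟩, rfl⟩
    refine ⟨cos_pos_of_mem_Ioo ⟨by linarith, hθ₁⟩, ?_⟩
    simpa using cos_lt_cos_of_nonneg_of_le_pi le_rfl (by linarith [pi_pos]) hθ₀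
  · rintro ⟨hw₀, hw₁⟩
    exact ⟨arccos w, ⟨arccos_pos.2 hw₁, arccos_lt_pi_div_two.2 hw₀⟩,
      cos_arccos (by linarith) hw₁.le⟩

noncomputable def ellipticKIntegrand (m w : ℝ) : ℝ :=
  1 / √((1 - w ^ 2) * (m + (1 - m) * w ^ 2))

theorem ellipticK_one_sub_eq_integral (m : ℝ) :
    ellipticK (1 - m) = ∫ w in Ioo 0 1, ellipticKIntegrand m w := by
  have hinj : InjOn cos (Ioo 0 (π / 2)) :=
    injOn_cos.mono (Ioo_subset_Icc_self.trans (Icc_subset_Icc le_rfl (by linarith [pi_pos])))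
  rw [← cos_image_Ioo_zero_pi_div_two,
    integral_image_eq_integral_abs_deriv_smul measurableSet_Ioo
      (fun θ _ => (hasDerivAt_cos θ).hasDerivWithinAt) hinj,
    ellipticK, intervalIntegral.integral_of_le (by positivity), ← integral_Ioc_eq_integral_Ioo]
  refine setIntegral_congr_fun measurableSet_Ioc fun θ ⟨hθ₀, hθ₁⟩ => ?_
  have hsin : 0 < sin θ := sin_pos_of_pos_of_lt_pi hθ₀ (by linarith [pi_pos])
  have hfactor : (1 - cos θ ^ 2) * (m + (1 - m) * cos θ ^ 2)
      = sin θ ^ 2 * (1 - (1 - m) * sin θ ^ 2) := by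
    rw [← sin_sq]; linear_combination (1 - m) * sin θ ^ 2 * sin_sq_add_cos_sq θ
  rw [ellipticKIntegrand, hfactor, sqrt_mul (sq_nonneg _), sqrt_sq hsin.le, smul_eq_mul, abs_neg,
    abs_of_pos hsin, mul_one_div, div_mul_cancel_left₀ hsin.ne', one_div]

theorem hasDerivAt_log_add_sqrt_add_sq {c : ℝ} (hc : 0 < c) (w : ℝ) :
    HasDerivAt (fun w => log (w + √(c + w ^ 2))) (1 / √(c + w ^ 2)) w := by
  have hpos : 0 < c + w ^ 2 := by positivity
  have hsum : 0 < w + √(c + w ^ 2) := by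
    have : |w| < √(c + w ^ 2) := by
      rw [← sqrt_sq_eq_abs]; exact sqrt_lt_sqrt (sq_nonneg _) (by linarith)
    linarith [neg_abs_le w]
  have hinner : HasDerivAt (fun w => w + √(c + w ^ 2)) (1 + w / √(c + w ^ 2)) w := by
    refine (HasDerivAt.add (hasDerivAt_id' w)
      (((hasDerivAt_pow 2 w).const_add c).sqrt hpos.ne')).congr_deriv ?_
    field_simp
    norm_num
    ring
  convert hinner.log hsum.ne' using 1
  field_simp
  ring

theorem integral_Ioo_one_div_sqrt_add_sq {c : ℝ} (hc : 0 < c) :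
    ∫ w in Ioo 0 1, 1 / √(c + w ^ 2) = log (1 + √(c + 1)) - log c / 2 := by
  rw [← integral_Ioc_eq_integral_Ioo, ← intervalIntegral.integral_of_le zero_le_one,
    intervalIntegral.integral_eq_sub_of_hasDerivAt
      (fun w _ => hasDerivAt_log_add_sqrt_add_sq hc w)
      (Continuous.intervalIntegrable (continuous_const.div (by fun_prop)
        fun w => (sqrt_pos.2 (by positivity)).ne') _ _)]
  simp [log_sqrt hc.le]

noncomputable def ellipticKRemainder (m w : ℝ) : ℝ :=
  ellipticKIntegrand m w - 1 / √(m + w ^ 2)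

theorem measurable_ellipticKRemainder (m : ℝ) : Measurable (ellipticKRemainder m) := by
  unfold ellipticKRemainder ellipticKIntegrand
  fun_prop

theorem continuousAt_ellipticKRemainder_zero {w : ℝ} (hw : w ∈ Ioo 0 1) :
    ContinuousAt (fun m => ellipticKRemainder m w) 0 := by
  have h₁ : 0 < 1 - w ^ 2 := by nlinarith [hw.1, hw.2]
  have h₂ : 0 < w ^ 2 := pow_pos hw.1 2
  unfold ellipticKRemainder ellipticKIntegrand
  refine (continuousAt_const.div (by fun_prop) ?_).sub (continuousAt_const.div (by fun_prop) ?_)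
  · exact (sqrt_pos.2 (by simpa using mul_pos h₁ h₂)).ne'
  · exact (sqrt_pos.2 (by simpa using h₂)).ne'

theorem ellipticKRemainder_zero {w : ℝ} (hw : 0 < w) :
    ellipticKRemainder 0 w = 1 / (w * √(1 - w ^ 2)) - 1 / w := by
  simp only [ellipticKRemainder, ellipticKIntegrand, zero_add, sub_zero, one_mul]
  rw [mul_comm, sqrt_mul (sq_nonneg w), sqrt_sq hw.le]

theorem hasDerivAt_neg_log_one_add_sqrt_one_sub_sq {w : ℝ} (hw : w ∈ Ioo 0 1) :
    HasDerivAt (fun w => -log (1 + √(1 - w ^ 2))) (ellipticKRemainder 0 w) w := by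
  have hpos : 0 < 1 - w ^ 2 := by nlinarith [hw.1, hw.2]
  have hsq := sq_sqrt hpos.le
  have hw₀ : w ≠ 0 := hw.1.ne'
  refine ((((hasDerivAt_pow 2 w).const_sub 1).sqrt hpos.ne').const_add 1 |>.log
    (by positivity)).neg.congr_deriv ?_
  rw [ellipticKRemainder_zero hw.1]
  field_simp
  linear_combination 2 * hsq

theorem ellipticKRemainder_nonneg {m w : ℝ} (hm : 0 ≤ m) (hw : w ∈ Ioo 0 1) :
    0 ≤ ellipticKRemainder m w := by
  obtain ⟨hw₀, hw₁⟩ := hw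
  have hw₂ : w ^ 2 < 1 := by nlinarith
  have hpos : 0 < m + (1 - m) * w ^ 2 := by
    nlinarith [mul_le_mul_of_nonneg_left hw₂.le hm, pow_pos hw₀ 2]
  have hprod : 0 < (1 - w ^ 2) * (m + (1 - m) * w ^ 2) := mul_pos (by linarith) hpos
  have hle : (1 - w ^ 2) * (m + (1 - m) * w ^ 2) ≤ m + w ^ 2 := by
    nlinarith [mul_nonneg hm (sq_nonneg w), mul_nonneg (sq_nonneg w) hpos.le]
  exact sub_nonneg.2 <| one_div_le_one_div_of_le (sqrt_pos.2 hprod) (sqrt_le_sqrt hle)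

theorem continuousOn_neg_log_one_add_sqrt_one_sub_sq :
    ContinuousOn (fun w : ℝ => -log (1 + √(1 - w ^ 2))) (Icc 0 1) :=
  (continuousOn_log.comp (by fun_prop) fun w _ => (by positivity : 0 < 1 + √(1 - w ^ 2)).ne').neg

theorem integrableOn_ellipticKRemainder_zero : IntegrableOn (ellipticKRemainder 0) (Ioo 0 1) :=
  (intervalIntegral.integrableOn_deriv_of_nonneg continuousOn_neg_log_one_add_sqrt_one_sub_sq
    (fun _ hw => hasDerivAt_neg_log_one_add_sqrt_one_sub_sq hw)
    (fun _ hw => ellipticKRemainder_nonneg le_rfl hw)).mono_set Ioo_subset_Ioc_self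

theorem integral_ellipticKRemainder_zero : ∫ w in Ioo 0 1, ellipticKRemainder 0 w = log 2 := by
  rw [← integral_Ioc_eq_integral_Ioo, ← intervalIntegral.integral_of_le zero_le_one,
    intervalIntegral.integral_eq_sub_of_hasDeriv_right_of_le zero_le_one
      continuousOn_neg_log_one_add_sqrt_one_sub_sq
      (fun _ hw => (hasDerivAt_neg_log_one_add_sqrt_one_sub_sq hw).hasDerivWithinAt)
      ((intervalIntegrable_iff_integrableOn_Ioo_of_le zero_le_one).2
        integrableOn_ellipticKRemainder_zero)]
  norm_num

theorem self_le_sqrt_two_mul_sqrt {m w : ℝ} (hm₀ : 0 ≤ m) (hm : m ≤ 1 / 2) :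
    w ≤ √2 * √(m + (1 - m) * w ^ 2) := by
  rw [← sqrt_mul zero_le_two]
  exact (le_abs_self w).trans (abs_le_sqrt (by nlinarith))

theorem one_div_sqrt_sub_one_div_sqrt_le {m w : ℝ} (hm₀ : 0 ≤ m) (hm : m ≤ 1 / 2) (hw : 0 < w) :
    1 / √(m + (1 - m) * w ^ 2) - 1 / √(m + w ^ 2) ≤ √2 := by
  have hq_sq : √(m + (1 - m) * w ^ 2) ^ 2 = m + (1 - m) * w ^ 2 :=
    sq_sqrt (by nlinarith [sq_nonneg w])
  have hr_sq : √(m + w ^ 2) ^ 2 = m + w ^ 2 := sq_sqrt (by positivity)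
  have hwq := self_le_sqrt_two_mul_sqrt (w := w) hm₀ hm
  have hqr : √(m + (1 - m) * w ^ 2) ≤ √(m + w ^ 2) := sqrt_le_sqrt (by nlinarith)
  set q := √(m + (1 - m) * w ^ 2)
  set r := √(m + w ^ 2)
  have hsqrt2 : 0 < √2 := sqrt_pos.2 zero_lt_two
  have hq : 0 < q := by nlinarith
  have hr : 0 < r := hq.trans_le hqr
  rw [div_sub_div _ _ hq.ne' hr.ne', div_le_iff₀ (by positivity)]
  -- `(r - q) (r + q) = m w² ≤ w r² ≤ √2 q r²`, then cancel `r + q ≥ r`.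
  have hdiff : (r - q) * (r + q) = m * w ^ 2 := by linear_combination hr_sq - hq_sq
  have h₁ : m * w ^ 2 ≤ w * r ^ 2 := by nlinarith
  have h₂ : w * r ^ 2 ≤ √2 * q * r ^ 2 := mul_le_mul_of_nonneg_right hwq (sq_nonneg r)
  have h₃ : √2 * q * r ^ 2 ≤ √2 * (q * r) * (r + q) := by
    nlinarith [mul_pos hsqrt2 (mul_pos hq hr)]
  nlinarith

theorem norm_ellipticKRemainder_le {m w : ℝ} (hm₀ : 0 ≤ m) (hm : m ≤ 1 / 2) (hw : w ∈ Ioo 0 1) :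
    ‖ellipticKRemainder m w‖ ≤ √2 * ellipticKRemainder 0 w + √2 := by
  rw [norm_of_nonneg (ellipticKRemainder_nonneg hm₀ hw)]
  obtain ⟨hw₀, hw₁⟩ := hw
  have hs₂ : 0 < 1 - w ^ 2 := by nlinarith
  have hrem : ellipticKRemainder m w
      = 1 / √(m + (1 - m) * w ^ 2) * (1 / √(1 - w ^ 2) - 1)
        + (1 / √(m + (1 - m) * w ^ 2) - 1 / √(m + w ^ 2)) := by
    rw [ellipticKRemainder, ellipticKIntegrand, sqrt_mul hs₂.le]
    ring
  have hrem₀ : ellipticKRemainder 0 w = 1 / w * (1 / √(1 - w ^ 2) - 1) := by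
    rw [ellipticKRemainder_zero hw₀]
    ring
  have hregular := one_div_sqrt_sub_one_div_sqrt_le hm₀ hm hw₀
  have hwq := self_le_sqrt_two_mul_sqrt (w := w) hm₀ hm
  set s := √(1 - w ^ 2)
  set q := √(m + (1 - m) * w ^ 2)
  have hq : 0 < q := by nlinarith [sqrt_pos.2 (zero_lt_two : (0 : ℝ) < 2)]
  have hsingular : 1 / q * (1 / s - 1) ≤ √2 * (1 / w * (1 / s - 1)) := by
    have hq_inv : 1 / q ≤ √2 / w := by
      rw [div_le_div_iff₀ hq hw₀]
      linarith
    rw [← mul_assoc, mul_one_div]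
    exact mul_le_mul_of_nonneg_right hq_inv
      (sub_nonneg.2 (one_le_one_div (sqrt_pos.2 hs₂) (sqrt_le_one.2 (by nlinarith))))
  rw [hrem, hrem₀]
  linarith

theorem integrableOn_ellipticKRemainder_majorant :
    IntegrableOn (fun w => √2 * ellipticKRemainder 0 w + √2) (Ioo 0 1) :=
  (integrableOn_ellipticKRemainder_zero.const_mul √2).add
    (integrableOn_const (C := √2) measure_Ioo_lt_top.ne)

theorem integrableOn_ellipticKRemainder {m : ℝ} (hm₀ : 0 ≤ m) (hm : m ≤ 1 / 2) :
    IntegrableOn (ellipticKRemainder m) (Ioo 0 1) :=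
  Integrable.mono' integrableOn_ellipticKRemainder_majorant
    (measurable_ellipticKRemainder m).aestronglyMeasurable
    ((ae_restrict_iff' measurableSet_Ioo).2
      (ae_of_all _ fun _ => norm_ellipticKRemainder_le hm₀ hm))

theorem tendsto_integral_ellipticKRemainder :
    Tendsto (fun m => ∫ w in Ioo 0 1, ellipticKRemainder m w) (𝓝[>] 0) (𝓝 (log 2)) := by
  rw [← integral_ellipticKRemainder_zero]
  have hsmall : ∀ᶠ m in 𝓝[>] (0 : ℝ), m ∈ Ioo 0 (1 / 2) := Ioo_mem_nhdsGT (by norm_num)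
  refine tendsto_integral_filter_of_dominated_convergence _
    (Eventually.of_forall fun m => (measurable_ellipticKRemainder m).aestronglyMeasurable)
    (hsmall.mono fun m hm => (ae_restrict_iff' measurableSet_Ioo).2
      (ae_of_all _ fun _ => norm_ellipticKRemainder_le hm.1.le hm.2.le))
    integrableOn_ellipticKRemainder_majorant
    ((ae_restrict_iff' measurableSet_Ioo).2 (ae_of_all _ fun _ hw =>
      (continuousAt_ellipticKRemainder_zero hw).tendsto.mono_left nhdsWithin_le_nhds))

theorem ellipticK_one_sub_eq_integral_ellipticKRemainder {m : ℝ} (hm₀ : 0 < m) (hm : m ≤ 1 / 2) :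
    ellipticK (1 - m)
      = (∫ w in Ioo 0 1, ellipticKRemainder m w) + log (1 + √(m + 1)) - log m / 2 := by
  have hcomparison : IntegrableOn (fun w => 1 / √(m + w ^ 2)) (Ioo 0 1) :=
    (continuous_const.div (by fun_prop) fun w => (sqrt_pos.2 (by positivity)).ne')
      |>.integrableOn_Icc.mono_set Ioo_subset_Icc_self
  calc ellipticK (1 - m) = ∫ w in Ioo 0 1, (ellipticKRemainder m w + 1 / √(m + w ^ 2)) := by
        simp only [ellipticKRemainder, sub_add_cancel, ellipticK_one_sub_eq_integral]
    _ = _ := by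
        rw [integral_add (integrableOn_ellipticKRemainder hm₀.le hm) hcomparison,
          integral_Ioo_one_div_sqrt_add_sq hm₀]
        ring

/-- `K(1 - m') = (1/2) ln(16/m') + o(1)` as `m' → 0⁺`. -/
theorem ellipticK_asymptotic :
    Filter.Tendsto (fun m' : ℝ => ellipticK (1 - m') - (1 / 2) * Real.log (16 / m'))
      (nhdsWithin 0 (Set.Ioi 0)) (nhds 0) := by
  have heq : ∀ᶠ m in 𝓝[>] (0 : ℝ),
      (∫ w in Ioo 0 1, ellipticKRemainder m w) + log (1 + √(m + 1)) - log 4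
        = ellipticK (1 - m) - 1 / 2 * log (16 / m) := by
    filter_upwards [Ioo_mem_nhdsGT (by norm_num : (0 : ℝ) < 1 / 2)] with m hm
    rw [ellipticK_one_sub_eq_integral_ellipticKRemainder hm.1 hm.2.le,
      log_div (by norm_num) hm.1.ne', show (16 : ℝ) = 4 ^ 2 by norm_num, log_pow]
    ring
  have hlog : Tendsto (fun m : ℝ => log (1 + √(m + 1))) (𝓝[>] 0) (𝓝 (log 2)) := by
    have : ContinuousAt (fun m : ℝ => log (1 + √(m + 1))) 0 :=
      (continuousAt_log (by positivity)).comp (by fun_prop)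
    simpa [one_add_one_eq_two] using this.tendsto.mono_left nhdsWithin_le_nhds
  have hlog4 : log 2 + log 2 - log 4 = 0 := by
    rw [show (4 : ℝ) = 2 ^ 2 by norm_num, log_pow]
    ring
  simpa [hlog4] using ((tendsto_integral_ellipticKRemainder.add hlog).sub_const (log 4)).congr' heq
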